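/- Let N be a group, T ⊴ N, and π : N → N/T the quotient map. Suppose n0 ∈ N satisfies: π(n0) = w0 is a central involution of N/T, n0² = z for some fixed element z ≠ 1 of T, and n0 H n0⁻¹ = H⁻¹ for all H ∈ T. Then every preimage N0 ∈ N of w0 satisfies N0² = z; in particular no preimage of w0 is an involution, and T has no complement in N. -/
import Mathlib


/-- If `n0` maps to a central involution `w0` of `N/T`, inverts `T` by conjugation, and
`n0² = z ∈ T` with `z ≠ 1`, then every preimage of `w0` squares to `z`; in particular
no preimage of `w0` is an involution and `T` has no complement in `N`. -/
theorem stmt5 {N : Type*} [Group N] (T : Subgroup N) [hT : T.Normal]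
    (hab : ∀ a ∈ T, ∀ b ∈ T, a * b = b * a)
    (n0 z : N) (hz : z ∈ T) (hz1 : z ≠ 1)
    (hcent : QuotientGroup.mk' T n0 ∈ Subgroup.center (N ⧸ T))
    (hinv : orderOf (QuotientGroup.mk' T n0) = 2)
    (hsq : n0 ^ 2 = z)
    (hconj : ∀ H ∈ T, n0 * H * n0⁻¹ = H⁻¹) :
    (∀ N0 : N, QuotientGroup.mk' T N0 = QuotientGroup.mk' T n0 →
        N0 ^ 2 = z ∧ orderOf N0 ≠ 2) ∧
    ¬ ∃ K : Subgroup N, (∀ n : N, ∃ t ∈ T, ∃ k ∈ K, n = t * k) ∧ T ⊓ K = ⊥ := by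
  have key : ∀ N0 : N, QuotientGroup.mk' T N0 = QuotientGroup.mk' T n0 → N0 ^ 2 = z := by
    intro N0 hmk
    have ht : n0⁻¹ * N0 ∈ T := by
      have h2 : (N0 : N ⧸ T) = (n0 : N ⧸ T) := hmk
      simpa using T.inv_mem (QuotientGroup.eq.mp h2)
    have hc := hconj _ ht
    calc N0 ^ 2 = (n0 * (n0⁻¹ * N0) * n0⁻¹) * n0 ^ 2 * (n0⁻¹ * N0) := by
          rw [pow_two, pow_two]; group
    _ = (n0⁻¹ * N0)⁻¹ * z * (n0⁻¹ * N0) := by rw [hc, hsq]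
    _ = z * (n0⁻¹ * N0)⁻¹ * (n0⁻¹ * N0) := by rw [hab _ (T.inv_mem ht) _ hz]
    _ = z := by group
  constructor
  · intro N0 hmk
    refine ⟨key N0 hmk, fun h => hz1 ?_⟩
    rw [← key N0 hmk]
    exact (orderOf_eq_iff (by norm_num)).mp h |>.1
  · rintro ⟨K, hK, hKT⟩
    obtain ⟨t, htT, k, hkK, hn0⟩ := hK n0
    have hmk : QuotientGroup.mk' T k = QuotientGroup.mk' T n0 := by
      have h1 : ((t : N) : N ⧸ T) = 1 := (QuotientGroup.eq_one_iff t).mpr htT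
      show ((k : N) : N ⧸ T) = ((n0 : N) : N ⧸ T)
      rw [hn0, QuotientGroup.mk_mul, h1, one_mul]
    have hk2 : k ^ 2 = z := key k hmk
    have : z ∈ T ⊓ K := ⟨hz, hk2 ▸ K.pow_mem hkK 2⟩
    rw [hKT] at this
    exact hz1 this
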